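/- arXiv:1305.3033 — 11 statements merged into one kernel-verified Lean document; each statement's English description precedes it below -/
import Mathlib

section
/- Let n be a natural number and H an additive subgroup of ℝⁿ. Then there exist an ℝ-linear subspace E of ℝⁿ and a discrete additive subgroup D of ℝⁿ such that the topological closure of H equals the set E + D = {e + d : e ∈ E, d ∈ D}, the intersection of E with the ℝ-linear span of D is {0}, and E + span_ℝ(D) = span_ℝ(H). -/
/-!
Let `G` be the closure of `H` and `E` the largest linear subspace contained in `G`. For a linear
complement `F` of `E`, `G = E + (G ∩ F)`, and the closed subgroup `D = G ∩ F` contains no line.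
Such a subgroup is discrete: otherwise it has nonzero elements `d k → 0`, a limit direction `v` of
`d k / ‖d k‖` exists by compactness of the unit sphere, and `⌊t / ‖d k‖⌋ • d k → t • v` puts the
whole line `ℝ v` into `D`. The span identities follow from `span D ≤ F` and `span G = span H`.
-/

open Pointwise Filter Topology

theorem tendsto_floor_div_mul {ι : Type*} {l : Filter ι} {r : ι → ℝ} (hr_pos : ∀ k, 0 < r k)
    (hr : Tendsto r l (𝓝 0)) (t : ℝ) : Tendsto (fun k => (⌊t / r k⌋ : ℝ) * r k) l (𝓝 t) := by
  refine tendsto_of_tendsto_of_tendsto_of_le_of_le (g := fun k => t - r k) ?_ tendsto_const_nhds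
    (fun k => ?_) (fun k => ?_)
  · simpa using tendsto_const_nhds.sub hr
  · linarith [Int.sub_floor_div_mul_lt t (hr_pos k)]
  · linarith [Int.sub_floor_div_mul_nonneg t (hr_pos k)]

theorem Submodule.span_closure_eq_span {V : Type*} [NormedAddCommGroup V] [NormedSpace ℝ V]
    [FiniteDimensional ℝ V] (s : Set V) : span ℝ (closure s) = span ℝ s :=
  le_antisymm (span_le.mpr (closure_minimal subset_span (span ℝ s).closed_of_finiteDimensional))
    (span_mono subset_closure)

namespace AddSubgroup

section largestSubmodule

variable (R : Type*) {M : Type*} [Semiring R] [AddCommGroup M] [Module R M]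

def largestSubmodule (G : AddSubgroup M) : Submodule R M where
  carrier := {x | ∀ t : R, t • x ∈ G}
  add_mem' hx hy t := by simpa only [smul_add] using G.add_mem (hx t) (hy t)
  zero_mem' t := by simpa only [smul_zero] using G.zero_mem
  smul_mem' c _ hx t := by simpa only [smul_smul] using hx (t * c)

variable {R}

theorem coe_largestSubmodule_subset (G : AddSubgroup M) :
    (G.largestSubmodule R : Set M) ⊆ G := fun x hx =>
  one_smul R x ▸ hx 1

theorem largestSubmodule_mono {G K : AddSubgroup M} (h : G ≤ K) :
    G.largestSubmodule R ≤ K.largestSubmodule R := fun _ hx t => h (hx t)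

end largestSubmodule

theorem coe_eq_add_inf_of_isCompl {R M : Type*} [Ring R] [AddCommGroup M] [Module R M]
    (G : AddSubgroup M) {E F : Submodule R M} (hEG : (E : Set M) ⊆ G) (hEF : IsCompl E F) :
    (G : Set M) = E + (G ⊓ F.toAddSubgroup : AddSubgroup M) := by
  refine Set.Subset.antisymm (fun x hx => ?_) ?_
  · obtain ⟨e, f, he, hf, rfl⟩ := Submodule.codisjoint_iff_exists_add_eq.mp hEF.codisjoint x
    have hfG : f ∈ G := by simpa using G.sub_mem hx (hEG he)
    exact ⟨e, he, f, ⟨hfG, hf⟩, rfl⟩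
  · rintro _ ⟨e, he, d, hd, rfl⟩
    exact G.add_mem (hEG he) hd.1

/-- The multiples `⌊t / r k⌋ • (r k • u k) ∈ G` tend to `t • v`. -/
theorem mem_largestSubmodule_of_tendsto {V : Type*} [AddCommGroup V] [Module ℝ V]
    [TopologicalSpace V] [ContinuousSMul ℝ V] {G : AddSubgroup V} (hG : IsClosed (G : Set V))
    {ι : Type*} {l : Filter ι} [l.NeBot] {r : ι → ℝ} {u : ι → V} {v : V}
    (hr_pos : ∀ k, 0 < r k) (hr : Tendsto r l (𝓝 0)) (hu : Tendsto u l (𝓝 v))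
    (hmem : ∀ k, r k • u k ∈ G) : v ∈ G.largestSubmodule ℝ := fun t => by
  have hmul : ∀ k, ⌊t / r k⌋ • r k • u k = ((⌊t / r k⌋ : ℝ) * r k) • u k := fun k => by
    rw [mul_smul, Int.cast_smul_eq_zsmul]
  refine hG.mem_of_tendsto (b := l) ?_
    (Eventually.of_forall fun k => zsmul_mem (hmem k) ⌊t / r k⌋)
  simpa only [hmul] using (tendsto_floor_div_mul hr_pos hr t).smul hu

theorem discreteTopology_of_norm_lt {V : Type*} [SeminormedAddCommGroup V] {G : AddSubgroup V}
    {ε : ℝ} (hε : 0 < ε) (h : ∀ x ∈ G, ‖x‖ < ε → x = 0) : DiscreteTopology G := by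
  refine discreteTopology_iff_isOpen_singleton_zero.mpr ⟨Metric.ball 0 ε, Metric.isOpen_ball, ?_⟩
  ext ⟨x, hx⟩
  simp only [Set.mem_preimage, Metric.mem_ball, dist_zero_right, Set.mem_singleton_iff]
  refine ⟨fun hxε => Subtype.ext (h x hx hxε), fun hx0 => ?_⟩
  obtain rfl : x = 0 := congrArg Subtype.val hx0
  simpa using hε

section FiniteDimensional

variable {V : Type*} [NormedAddCommGroup V] [NormedSpace ℝ V] [FiniteDimensional ℝ V]

theorem discreteTopology_of_largestSubmodule_eq_bot {G : AddSubgroup V}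
    (hG : IsClosed (G : Set V)) (hG_bot : G.largestSubmodule ℝ = ⊥) : DiscreteTopology G := by
  suffices ∃ ε > 0, ∀ x ∈ G, ‖x‖ < ε → x = 0 by
    obtain ⟨ε, hε, hG_short⟩ := this
    exact discreteTopology_of_norm_lt hε hG_short
  by_contra! hshort
  choose d hdG hd_lt hd_ne using fun k : ℕ => hshort (1 / (k + 1)) Nat.one_div_pos_of_nat
  have hd_pos : ∀ k, 0 < ‖d k‖ := fun k => norm_pos_iff.mpr (hd_ne k)
  have hd_lim : Tendsto (fun k => ‖d k‖) atTop (𝓝 0) :=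
    squeeze_zero (fun k => (hd_pos k).le) (fun k => (hd_lt k).le)
      tendsto_one_div_add_atTop_nhds_zero_nat
  obtain ⟨v, hv, φ, hφ, hlim⟩ := (isCompact_sphere (0 : V) 1).tendsto_subseq
    (x := fun k => ‖d k‖⁻¹ • d k) fun k => by
      simp [norm_smul, inv_mul_cancel₀ (hd_pos k).ne']
  have hv_mem : v ∈ G.largestSubmodule ℝ :=
    mem_largestSubmodule_of_tendsto hG (fun k => hd_pos (φ k)) (hd_lim.comp hφ.tendsto_atTop)
      hlim fun k => by simpa [smul_smul, mul_inv_cancel₀ (hd_pos (φ k)).ne'] using hdG (φ k)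
  rw [hG_bot, Submodule.mem_bot] at hv_mem
  simp [hv_mem] at hv

theorem exists_submodule_discrete_of_isClosed {G : AddSubgroup V} (hG : IsClosed (G : Set V)) :
    ∃ (E : Submodule ℝ V) (D : AddSubgroup V), DiscreteTopology D ∧
      (G : Set V) = (E : Set V) + (D : Set V) ∧ E ⊓ Submodule.span ℝ (D : Set V) = ⊥ ∧
      E ⊔ Submodule.span ℝ (D : Set V) = Submodule.span ℝ (G : Set V) := by
  set E := G.largestSubmodule ℝ
  obtain ⟨F, hEF⟩ := E.exists_isCompl
  set D := G ⊓ F.toAddSubgroup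
  have hEG : (E : Set V) ⊆ G := G.coe_largestSubmodule_subset
  have hDF : Submodule.span ℝ (D : Set V) ≤ F := Submodule.span_le.mpr fun _ hx => hx.2
  have hGD : (G : Set V) = E + D := G.coe_eq_add_inf_of_isCompl hEG hEF
  have hD_bot : D.largestSubmodule ℝ = ⊥ := by
    refine eq_bot_iff.mpr (hEF.inf_eq_bot ▸ le_inf (largestSubmodule_mono inf_le_left) ?_)
    exact fun x hx => (D.coe_largestSubmodule_subset hx).2
  have hD : DiscreteTopology D :=
    discreteTopology_of_largestSubmodule_eq_bot (hG.inter F.closed_of_finiteDimensional) hD_bot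
  refine ⟨E, D, hD, hGD, ?_, le_antisymm ?_ ?_⟩
  · exact eq_bot_iff.mpr (hEF.inf_eq_bot ▸ inf_le_inf_left E hDF)
  · exact sup_le (hEG.trans Submodule.subset_span) (Submodule.span_mono inf_le_left)
  · rw [Submodule.span_le, Submodule.coe_sup, hGD]
    exact Set.add_subset_add_left Submodule.subset_span

end FiniteDimensional

end AddSubgroup

/-- Waldschmidt's structure theorem applied to the closure of an additive
subgroup `H` of `ℝⁿ`: the closure of `H` is `E + D` with `E` a linear subspace,
`D` a discrete additive subgroup, `E ∩ span ℝ D = {0}` and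
`E + span ℝ D = span ℝ H`. -/
theorem closure_eq_subspace_add_discrete (n : ℕ) (H : AddSubgroup (Fin n → ℝ)) :
    ∃ (E : Submodule ℝ (Fin n → ℝ)) (D : AddSubgroup (Fin n → ℝ)),
      DiscreteTopology D ∧
      closure (H : Set (Fin n → ℝ)) = (E : Set (Fin n → ℝ)) + (D : Set (Fin n → ℝ)) ∧
      E ⊓ Submodule.span ℝ (D : Set (Fin n → ℝ)) = ⊥ ∧
      E ⊔ Submodule.span ℝ (D : Set (Fin n → ℝ)) = Submodule.span ℝ (H : Set (Fin n → ℝ)) := by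
  rw [← Submodule.span_closure_eq_span]
  exact AddSubgroup.exists_submodule_discrete_of_isClosed H.isClosed_topologicalClosure
end

section
/- Let H be an additive subgroup of ℝⁿ, E an ℝ-linear subspace of ℝⁿ and D a discrete additive subgroup of ℝⁿ such that the closure of H equals the set E + D, E ∩ span_ℝ(D) = {0}, and E + span_ℝ(D) = span_ℝ(H). Let π, π' : ℝⁿ → ℝⁿ be linear maps such that π(x) = x and π'(x) = 0 for all x ∈ E, and π(x) = 0 and π'(x) = x for all x ∈ span_ℝ(D). Then the closure of π(H) equals E (as a set) and π'(H) = D (as a set). -/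
open Pointwise

/-- Theorem 1.1: if `closure H = E + D` with `E ∩ span ℝ D = {0}` and
`E + span ℝ D = span ℝ H`, and `π, π'` are the projections corresponding to the
decomposition (identity on `E` and zero on `span ℝ D`, resp. zero on `E` and the
identity on `span ℝ D`), then `closure (π(H)) = E` and `π'(H) = D`. -/
theorem proj_closure_eq_and_proj_eq_discrete (n : ℕ) (H : AddSubgroup (Fin n → ℝ))
    (E : Submodule ℝ (Fin n → ℝ)) (D : AddSubgroup (Fin n → ℝ))
    (hD : DiscreteTopology D)
    (hclos : closure (H : Set (Fin n → ℝ)) = (E : Set (Fin n → ℝ)) + (D : Set (Fin n → ℝ)))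
    (hinf : E ⊓ Submodule.span ℝ (D : Set (Fin n → ℝ)) = ⊥)
    (hsup : E ⊔ Submodule.span ℝ (D : Set (Fin n → ℝ)) = Submodule.span ℝ (H : Set (Fin n → ℝ)))
    (π π' : (Fin n → ℝ) →ₗ[ℝ] (Fin n → ℝ))
    (hπE : ∀ x ∈ E, π x = x) (hπ'E : ∀ x ∈ E, π' x = 0)
    (hπD : ∀ x ∈ Submodule.span ℝ (D : Set (Fin n → ℝ)), π x = 0)
    (hπ'D : ∀ x ∈ Submodule.span ℝ (D : Set (Fin n → ℝ)), π' x = x) :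
    closure (π '' (H : Set (Fin n → ℝ))) = (E : Set (Fin n → ℝ)) ∧
      π' '' (H : Set (Fin n → ℝ)) = (D : Set (Fin n → ℝ)) := by
  have hπc : Continuous π := π.continuous_of_finiteDimensional
  have hπ'c : Continuous π' := π'.continuous_of_finiteDimensional
  have hEclosed : IsClosed (E : Set (Fin n → ℝ)) := Submodule.closed_of_finiteDimensional E
  have hHsub : (H : Set (Fin n → ℝ)) ⊆ (E : Set (Fin n → ℝ)) + (D : Set (Fin n → ℝ)) :=
    hclos ▸ subset_closure
  have hπH : π '' (H : Set (Fin n → ℝ)) ⊆ (E : Set (Fin n → ℝ)) := by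
    rintro - ⟨h, hh, rfl⟩
    obtain ⟨e, he, d, hd, rfl⟩ := Set.mem_add.1 (hHsub hh)
    have : π (e + d) = e := by
      rw [map_add, hπE e he, hπD d (Submodule.subset_span hd), add_zero]
    rw [this]; exact he
  have hπ'H : π' '' (H : Set (Fin n → ℝ)) ⊆ (D : Set (Fin n → ℝ)) := by
    rintro - ⟨h, hh, rfl⟩
    obtain ⟨e, he, d, hd, rfl⟩ := Set.mem_add.1 (hHsub hh)
    have : π' (e + d) = d := by
      rw [map_add, hπ'E e he, hπ'D d (Submodule.subset_span hd), zero_add]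
    rw [this]; exact hd
  constructor
  · refine subset_antisymm (closure_minimal hπH hEclosed) ?_
    intro e he
    have heH : e ∈ closure (H : Set (Fin n → ℝ)) := by
      rw [hclos]
      exact Set.mem_add.2 ⟨e, he, 0, D.zero_mem, add_zero e⟩
    have : π e ∈ closure (π '' (H : Set (Fin n → ℝ))) :=
      image_closure_subset_closure_image hπc ⟨e, heH, rfl⟩
    rwa [hπE e he] at this
  · refine subset_antisymm hπ'H ?_
    intro d hd
    have hdH : d ∈ closure (H : Set (Fin n → ℝ)) := by
      rw [hclos]
      exact Set.mem_add.2 ⟨0, E.zero_mem, d, hd, zero_add d⟩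
    have hdcl : d ∈ closure (π' '' (H : Set (Fin n → ℝ))) := by
      have : π' d ∈ closure (π' '' (H : Set (Fin n → ℝ))) :=
        image_closure_subset_closure_image hπ'c ⟨d, hdH, rfl⟩
      rwa [hπ'D d (Submodule.subset_span hd)] at this
    have hDclosed : IsClosed (D : Set (Fin n → ℝ)) := AddSubgroup.isClosed_of_discrete
    have hclosed : IsClosed (π' '' (H : Set (Fin n → ℝ))) := by
      have himg : π' '' (H : Set (Fin n → ℝ)) =
          Subtype.val '' (Subtype.val ⁻¹' (π' '' (H : Set (Fin n → ℝ))) : Set D) := by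
        ext x
        constructor
        · intro hx; exact ⟨⟨x, hπ'H hx⟩, hx, rfl⟩
        · rintro ⟨y, hy, rfl⟩; exact hy
      rw [himg]
      exact (Topology.IsClosedEmbedding.subtypeVal
        (show IsClosed {a | a ∈ D} from hDclosed)).isClosedMap _ (isClosed_discrete _)
    rwa [hclosed.closure_eq] at hdcl
end

section
/- Let H be an additive subgroup of ℝⁿ, E an ℝ-linear subspace of ℝⁿ and D a discrete additive subgroup of ℝⁿ such that the closure of H equals the set E + D, E ∩ span_ℝ(D) = {0}, and E + span_ℝ(D) = span_ℝ(H). If D ≠ {0}, then H is not dense in ℝⁿ. -/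
open Pointwise

/-- Corollary 1.2: if the discrete part `D` of the closure of `H` is nontrivial,
then `H` cannot be dense in `ℝⁿ`. -/
theorem not_dense_of_discrete_part_ne_bot (n : ℕ) (H : AddSubgroup (Fin n → ℝ))
    (E : Submodule ℝ (Fin n → ℝ)) (D : AddSubgroup (Fin n → ℝ))
    (hD : DiscreteTopology D)
    (hclos : closure (H : Set (Fin n → ℝ)) = (E : Set (Fin n → ℝ)) + (D : Set (Fin n → ℝ)))
    (hinf : E ⊓ Submodule.span ℝ (D : Set (Fin n → ℝ)) = ⊥)
    (hsup : E ⊔ Submodule.span ℝ (D : Set (Fin n → ℝ)) = Submodule.span ℝ (H : Set (Fin n → ℝ)))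
    (hne : D ≠ ⊥) :
    ¬ Dense (H : Set (Fin n → ℝ)) := by
  intro hdense
  -- The closure of H is everything, so E + D = univ.
  have huniv : (E : Set (Fin n → ℝ)) + (D : Set (Fin n → ℝ)) = Set.univ := by
    rw [← hclos, hdense.closure_eq]
  -- First show E ≠ ⊤ leads to contradiction via Baire category.
  have hEtop : E = ⊤ := by
    by_contra hEne
    -- D is countable
    haveI : Countable D := TopologicalSpace.separableSpace_iff_countable.mp inferInstance
    -- E + D is a countable union of translates of E
    have hcover : (Set.univ : Set (Fin n → ℝ)) = ⋃ d : D, ((d : Fin n → ℝ) +ᵥ (E : Set (Fin n → ℝ))) := by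
      rw [← huniv]
      ext x
      simp only [Set.mem_add, Set.mem_iUnion, Set.mem_vadd_set]
      constructor
      · rintro ⟨e, he, d, hd, rfl⟩
        exact ⟨⟨d, hd⟩, e, he, by simp [vadd_eq_add, add_comm]⟩
      · rintro ⟨⟨d, hd⟩, e, he, rfl⟩
        exact ⟨e, he, d, hd, by simp [vadd_eq_add, add_comm]⟩
    -- each translate is closed
    have hEclosed : IsClosed (E : Set (Fin n → ℝ)) := E.closed_of_finiteDimensional
    have := nonempty_interior_of_iUnion_of_closed
      (f := fun d : D => ((d : Fin n → ℝ) +ᵥ (E : Set (Fin n → ℝ))))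
      (fun d => hEclosed.vadd _) (by rw [← hcover])
    obtain ⟨d, hd⟩ := this
    -- translate back: E has nonempty interior
    have hEint : (interior (E : Set (Fin n → ℝ))).Nonempty := by
      have : interior ((d : Fin n → ℝ) +ᵥ (E : Set (Fin n → ℝ)))
          = (d : Fin n → ℝ) +ᵥ interior (E : Set (Fin n → ℝ)) := by
        exact (interior_vadd _ _)
      rw [this] at hd
      obtain ⟨x, hx⟩ := hd
      obtain ⟨y, hy, rfl⟩ := hx
      exact ⟨y, hy⟩
    exact hEne (E.eq_top_of_nonempty_interior' hEint)
  -- Now E = ⊤, so hinf forces span D = ⊥, hence D = ⊥.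
  apply hne
  have hspan : Submodule.span ℝ (D : Set (Fin n → ℝ)) = ⊥ := by
    rw [hEtop, top_inf_eq] at hinf
    exact hinf
  have hsub : (D : Set (Fin n → ℝ)) ⊆ (⊥ : Submodule ℝ (Fin n → ℝ)) := by
    rw [← hspan]; exact Submodule.subset_span
  ext x
  simp only [AddSubgroup.mem_bot]
  constructor
  · intro hx
    have := hsub hx
    simpa using this
  · rintro rfl; exact D.zero_mem
end

section
/- Let H be an additive subgroup of ℝⁿ. Then there exists u ∈ ℝⁿ such that the closure of the additive subgroup generated by H ∪ {u} equals span_ℝ(H) as a set; that is, H + ℤu is dense in the linear span of H. -/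
/-!
Pick a finite set `s ⊆ H` spanning `V = span ℝ H`. Every point of `V` lies within
`C = ∑_{b ∈ s} ‖b‖` of `H` (round its coordinates down). Given `x ∈ V` and `u₀ ∈ V`,
choose `m ∈ ℕ` large and `h ∈ H` close to `x - m u₀`; then `u = u₀ + (x - m u₀ - h) / m` is
within `C / m` of `u₀` and `h + m u = x`. So for every `x` and `ε` the set of `u ∈ V` with
`H + ℤu` meeting `ball x ε` is open and dense in `V`, and the Baire category theorem, applied
to `x` in a countable dense subset of `V` and `ε = 1 / (k + 1)`, gives one `u` that works
for all of them.
-/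

open Set Metric

section Approximation

variable {E : Type*} [SeminormedAddCommGroup E]

def goodGenerators (H : AddSubgroup E) (x : E) (ε : ℝ) : Set E :=
  {u | ∃ h ∈ H, ∃ m : ℤ, h + m • u ∈ ball x ε}

theorem isOpen_goodGenerators (H : AddSubgroup E) (x : E) (ε : ℝ) :
    IsOpen (goodGenerators H x ε) := by
  have : goodGenerators H x ε = ⋃ h ∈ H, ⋃ m : ℤ, (fun u => h + m • u) ⁻¹' ball x ε := by
    ext u
    simp [goodGenerators]
  rw [this]
  exact isOpen_biUnion fun h _ => isOpen_iUnion fun m => isOpen_ball.preimage (by fun_prop)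

theorem mem_closure_sup_zmultiples_of_forall_mem_goodGenerators {H : AddSubgroup E} {x u : E}
    (hu : ∀ ε > 0, u ∈ goodGenerators H x ε) :
    x ∈ closure ((H ⊔ AddSubgroup.zmultiples u : AddSubgroup E) : Set E) := by
  refine Metric.mem_closure_iff.2 fun ε hε => ?_
  obtain ⟨h, hh, m, hm⟩ := hu ε hε
  exact ⟨h + m • u, AddSubgroup.add_mem_sup hh (AddSubgroup.zsmul_mem_zmultiples u m),
    mem_ball'.1 hm⟩

end Approximation

section Span

variable {E : Type*} [NormedAddCommGroup E] [NormedSpace ℝ E]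

theorem exists_forall_mem_span_exists_norm_sub_le [FiniteDimensional ℝ E]
    (H : AddSubgroup E) :
    ∃ C : ℝ, ∀ y ∈ Submodule.span ℝ (H : Set E), ∃ h ∈ H, ‖y - h‖ ≤ C := by
  obtain ⟨s, hsH, hspan, hli⟩ := exists_linearIndependent ℝ (H : Set E)
  have : Fintype s := hli.setFinite.fintype
  refine ⟨∑ i : s, ‖(i : E)‖, fun y hy => ?_⟩
  rw [← hspan, ← Subtype.range_coe (s := s), Submodule.mem_span_range_iff_exists_fun] at hy
  obtain ⟨c, rfl⟩ := hy
  refine ⟨∑ i : s, ⌊c i⌋ • (i : E),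
    AddSubgroup.sum_mem _ fun i _ => H.zsmul_mem (hsH i.2) _, ?_⟩
  have hfract : ∑ i : s, c i • (i : E) - ∑ i : s, ⌊c i⌋ • (i : E) =
      ∑ i : s, Int.fract (c i) • (i : E) := by
    rw [← Finset.sum_sub_distrib]
    refine Finset.sum_congr rfl fun i _ => ?_
    rw [← Int.cast_smul_eq_zsmul ℝ, ← sub_smul, Int.fract]
  rw [hfract]
  refine (norm_sum_le _ _).trans (Finset.sum_le_sum fun i _ => ?_)
  rw [norm_smul, Real.norm_of_nonneg (Int.fract_nonneg _)]
  exact mul_le_of_le_one_left (norm_nonneg _) (Int.fract_lt_one _).le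

theorem dense_goodGenerators {H : AddSubgroup E} {C : ℝ}
    (hC : ∀ y ∈ Submodule.span ℝ (H : Set E), ∃ h ∈ H, ‖y - h‖ ≤ C)
    {x : E} (hx : x ∈ Submodule.span ℝ (H : Set E)) {ε : ℝ} (hε : 0 < ε) :
    Dense ((↑) ⁻¹' goodGenerators H x ε : Set (Submodule.span ℝ (H : Set E))) := by
  set V := Submodule.span ℝ (H : Set E)
  refine Metric.dense_iff.2 fun u₀ δ hδ => ?_
  obtain ⟨m, hm⟩ := exists_nat_gt (C / δ)
  have hC0 : 0 ≤ C := by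
    obtain ⟨h, -, hh⟩ := hC 0 V.zero_mem
    exact (norm_nonneg _).trans hh
  have hm0 : (0 : ℝ) < m := (div_nonneg hC0 hδ.le).trans_lt hm
  obtain ⟨h, hh, hyh⟩ := hC (x - (m : ℝ) • u₀) (V.sub_mem hx (V.smul_mem _ u₀.2))
  let u : V := ⟨u₀ + (m : ℝ)⁻¹ • (x - (m : ℝ) • u₀ - h), V.add_mem u₀.2
    (V.smul_mem _ (V.sub_mem (V.sub_mem hx (V.smul_mem _ u₀.2)) (Submodule.subset_span hh)))⟩
  refine ⟨u, ?_, h, hh, m, ?_⟩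
  · rw [mem_ball, Subtype.dist_eq, dist_eq_norm, add_sub_cancel_left, norm_smul,
      norm_inv, Real.norm_natCast, inv_mul_eq_div]
    calc ‖x - (m : ℝ) • (u₀ : E) - h‖ / m ≤ C / m := by gcongr
      _ < δ := (div_lt_iff₀ hm0).2 ((div_lt_iff₀' hδ).1 hm)
  · have : h + (m : ℤ) • (u : E) = x := by
      rw [natCast_zsmul, ← Nat.cast_smul_eq_nsmul ℝ, smul_add, smul_smul,
        mul_inv_cancel₀ hm0.ne', one_smul]
      abel
    rw [this]
    exact mem_ball_self hε

theorem exists_mem_span_subset_closure_sup_zmultiples [FiniteDimensional ℝ E]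
    (H : AddSubgroup E) :
    ∃ u ∈ Submodule.span ℝ (H : Set E),
      (Submodule.span ℝ (H : Set E) : Set E) ⊆
        closure ((H ⊔ AddSubgroup.zmultiples u : AddSubgroup E) : Set E) := by
  set V := Submodule.span ℝ (H : Set E)
  obtain ⟨C, hC⟩ := exists_forall_mem_span_exists_norm_sub_le H
  obtain ⟨Q, hQc, hQd⟩ := TopologicalSpace.exists_countable_dense V
  have := hQc.to_subtype
  have hgood :
      Dense (⋂ p : Q × ℕ, ((↑) ⁻¹' goodGenerators H (p.1 : E) (1 / (p.2 + 1)) : Set V)) :=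
    dense_iInter_of_isOpen
      (fun _ => (isOpen_goodGenerators H _ _).preimage continuous_subtype_val)
      fun p => dense_goodGenerators hC (p.1 : V).2 Nat.one_div_pos_of_nat
  obtain ⟨u, hu⟩ := hgood.nonempty
  refine ⟨u, u.2, ?_⟩
  have hQ : ∀ q ∈ Q,
      (q : E) ∈ closure ((H ⊔ AddSubgroup.zmultiples (u : E) : AddSubgroup E) : Set E) := by
    refine fun q hq => mem_closure_sup_zmultiples_of_forall_mem_goodGenerators fun ε hε => ?_
    obtain ⟨k, hk⟩ := exists_nat_one_div_lt hε
    obtain ⟨h, hh, m, hm⟩ := mem_iInter.1 hu (⟨q, hq⟩, k)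
    exact ⟨h, hh, m, ball_subset_ball hk.le hm⟩
  calc (V : Set E) = (↑) '' (univ : Set V) := by simp
    _ ⊆ (↑) '' closure Q := by rw [hQd.closure_eq]
    _ ⊆ closure ((↑) '' Q) := image_closure_subset_closure_image continuous_subtype_val
    _ ⊆ _ := closure_minimal (by rintro _ ⟨q, hq, rfl⟩; exact hQ q hq) isClosed_closure

end Span

/-- Theorem 1.6: for any additive subgroup `H` of `ℝⁿ` there is a vector `u`
such that `H + ℤu` is dense in the linear span of `H`. -/
theorem exists_add_zmultiples_dense_in_span (n : ℕ) (H : AddSubgroup (Fin n → ℝ)) :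
    ∃ u : Fin n → ℝ,
      closure ((H ⊔ AddSubgroup.zmultiples u : AddSubgroup (Fin n → ℝ)) : Set (Fin n → ℝ)) =
        (Submodule.span ℝ (H : Set (Fin n → ℝ)) : Set (Fin n → ℝ)) := by
  obtain ⟨u, hu, hdense⟩ := exists_mem_span_subset_closure_sup_zmultiples H
  refine ⟨u, (closure_minimal ?_ (Submodule.closed_of_finiteDimensional _)).antisymm hdense⟩
  exact (sup_le (fun h hh => Submodule.subset_span hh) (AddSubgroup.zmultiples_le.2 hu) :
    _ ≤ (Submodule.span ℝ (H : Set (Fin n → ℝ))).toAddSubgroup)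
end

section
/- Let H be an additive subgroup of ℝⁿ with dim_ℝ(span_ℝ(H)) < n. Then for every u ∈ ℝⁿ, the additive subgroup generated by H ∪ {u} (that is, H + ℤu) is not dense in ℝⁿ. -/
/-!
A proper subspace `span ℝ H` lies in the kernel of a nonzero linear form `f`, which is continuous
and onto `ℝ`. Then `f` maps `H + ℤu` onto the cyclic group `ℤ f(u)`, which is not dense in `ℝ`,
whereas the image of a dense set under a continuous surjection is dense.
-/

open AddSubgroup

theorem AddSubgroup.map_sup_zmultiples_of_le_ker {G N : Type*} [AddGroup G] [AddGroup N]
    {f : G →+ N} {H : AddSubgroup G} (hH : H ≤ f.ker) (u : G) :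
    (H ⊔ zmultiples u).map f = zmultiples (f u) := by
  rw [map_sup, (map_eq_bot_iff H).mpr hH, bot_sup_eq, f.map_zmultiples]

theorem AddSubgroup.not_dense_sup_zmultiples_of_le_ker {G : Type*} [AddGroup G]
    [TopologicalSpace G] {f : G →+ ℝ} (hf : Continuous f) (hsurj : Function.Surjective f)
    {H : AddSubgroup G} (hH : H ≤ f.ker) (u : G) :
    ¬ Dense ((H ⊔ zmultiples u : AddSubgroup G) : Set G) := fun hdense => by
  have himage : Dense ((zmultiples (f u) : AddSubgroup ℝ) : Set ℝ) := by
    rw [← map_sup_zmultiples_of_le_ker hH u, coe_map]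
    exact hsurj.denseRange.dense_image hf hdense
  rw [coe_zmultiples] at himage
  exact not_denseRange_zsmul himage

theorem AddSubgroup.not_dense_sup_zmultiples_of_span_ne_top {E : Type*} [AddCommGroup E]
    [Module ℝ E] [TopologicalSpace E] [IsTopologicalAddGroup E] [ContinuousSMul ℝ E] [T2Space E]
    [FiniteDimensional ℝ E] {H : AddSubgroup E} (hH : Submodule.span ℝ (H : Set E) ≠ ⊤)
    (u : E) : ¬ Dense ((H ⊔ zmultiples u : AddSubgroup E) : Set E) := by
  obtain ⟨f, hf0, hspan⟩ := (Submodule.span ℝ (H : Set E)).exists_le_ker_of_lt_top hH.lt_top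
  have hHker : H ≤ f.toAddMonoidHom.ker := fun x hx => hspan (Submodule.subset_span hx)
  exact not_dense_sup_zmultiples_of_le_ker f.continuous_of_finiteDimensional
    (f.surjective_or_eq_zero.resolve_right hf0) hHker u

/-- Corollary 1.7: if the span of an additive subgroup `H` of `ℝⁿ` has dimension
less than `n`, then for every `u` the subgroup `H + ℤu` is not dense in `ℝⁿ`. -/
theorem not_dense_add_zmultiples_of_finrank_span_lt (n : ℕ) (H : AddSubgroup (Fin n → ℝ))
    (hdim : Module.finrank ℝ (Submodule.span ℝ (H : Set (Fin n → ℝ))) < n) :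
    ∀ u : Fin n → ℝ,
      ¬ Dense ((H ⊔ AddSubgroup.zmultiples u : AddSubgroup (Fin n → ℝ)) : Set (Fin n → ℝ)) := by
  have hspan : Submodule.span ℝ (H : Set (Fin n → ℝ)) ≠ ⊤ := by
    refine (Submodule.lt_top_of_finrank_lt_finrank ?_).ne
    rwa [Module.finrank_fin_fun]
  exact not_dense_sup_zmultiples_of_span_ne_top hspan
end

section
/- Let (u₁, …, uₙ) be a basis of ℝⁿ and let α₁, …, αₙ be real numbers such that the family (1, α₁, …, αₙ) is linearly independent over ℚ. Then the additive subgroup ℤu₁ + ⋯ + ℤuₙ + ℤu, where u = α₁u₁ + ⋯ + αₙuₙ, is dense in ℝⁿ. -/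
/-!
Let `H` be the closure of the subgroup. If `H ≠ ℝⁿ`, then, being a closed subgroup that contains a
basis, `H` is integral under some nonzero linear form `φ`: on a complement `W` of the largest
subspace `V ⊆ H`, the subgroup `H ∩ W` is closed and contains no line, hence is discrete, hence a
lattice in `W`; a coordinate for a `ℤ`-basis of it, composed with the projection onto `W` along
`V`, does the job. The integers `cᵢ = φ(uᵢ)` and `m = φ(u)` then satisfy `m = ∑ cᵢ αᵢ`, so all `cᵢ`
vanish by the independence of `1, α₁, …, αₙ`, and `φ = 0`.
-/

open Filter Topology

namespace AddSubgroup

variable {R M : Type*} [Ring R] [AddCommGroup M] [Module R M]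

variable (R) in
/-- The largest `R`-submodule contained in `G` (named after the lineality space of a cone). -/
def lineality (G : AddSubgroup M) : Submodule R M where
  carrier := {x | ∀ t : R, t • x ∈ G}
  add_mem' hx hy t := by simpa only [smul_add] using G.add_mem (hx t) (hy t)
  zero_mem' t := by simpa only [smul_zero] using G.zero_mem
  smul_mem' s x hx t := by simpa only [smul_smul] using hx (t * s)

theorem mem_of_mem_lineality {G : AddSubgroup M} {x : M} (hx : x ∈ G.lineality R) : x ∈ G := by
  simpa using hx 1

theorem projectionOnto_mem_of_isCompl {G : AddSubgroup M} {W : Submodule R M}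
    (hW : IsCompl (G.lineality R) W) {x : M} (hx : x ∈ G) :
    (W.projectionOnto _ hW.symm x : M) ∈ G := by
  rw [← Submodule.projection_add_projection_eq_self hW x] at hx
  simpa using G.sub_mem hx (mem_of_mem_lineality ((G.lineality R).projectionOnto W hW x).2)

end AddSubgroup

theorem norm_floor_div_zsmul_sub_le {E : Type*} [SeminormedAddCommGroup E] [NormedSpace ℝ E]
    (x : E) (t : ℝ) : ‖⌊t / ‖x‖⌋ • x - t • (‖x‖⁻¹ • x)‖ ≤ ‖x‖ := by
  rw [smul_smul, ← div_eq_mul_inv, ← Int.cast_smul_eq_zsmul ℝ, ← sub_smul, norm_smul,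
    ← Int.self_sub_fract, sub_sub_cancel_left, norm_neg, Real.norm_of_nonneg (Int.fract_nonneg _)]
  exact mul_le_of_le_one_left (norm_nonneg _) (Int.fract_lt_one _).le

theorem IsZLattice.exists_ne_zero_forall_mem_eq_intCast {E : Type*} [NormedAddCommGroup E]
    [NormedSpace ℝ E] [FiniteDimensional ℝ E] [Nontrivial E] (L : Submodule ℤ E)
    [DiscreteTopology L] [IsZLattice ℝ L] :
    ∃ φ : E →ₗ[ℝ] ℝ, φ ≠ 0 ∧ ∀ x ∈ L, ∃ m : ℤ, φ x = m := by
  have : Module.Free ℤ L := ZLattice.module_free ℝ L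
  let bZ := Module.Free.chooseBasis ℤ L
  let bR := bZ.ofZLatticeBasis ℝ L
  obtain ⟨i⟩ := bR.index_nonempty
  refine ⟨bR.coord i, fun h => by simpa [bR] using LinearMap.congr_fun h (bR i), fun x hx => ?_⟩
  exact ⟨bZ.repr ⟨x, hx⟩ i, by simpa [bR] using bZ.ofZLatticeBasis_repr_apply ℝ L ⟨x, hx⟩ i⟩

namespace AddSubgroup

variable {E : Type*} [NormedAddCommGroup E] [NormedSpace ℝ E]

theorem smul_mem_of_tendsto_direction {G : AddSubgroup E} (hG : IsClosed (G : Set E))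
    {g : ℕ → E} (hgG : ∀ k, g k ∈ G) (hg : Tendsto g atTop (𝓝 0)) {e : E}
    (he : Tendsto (fun k => ‖g k‖⁻¹ • g k) atTop (𝓝 e)) (t : ℝ) : t • e ∈ G := by
  have hsmall : Tendsto (fun k => ⌊t / ‖g k‖⌋ • g k - t • (‖g k‖⁻¹ • g k)) atTop (𝓝 0) :=
    squeeze_zero_norm (fun k => norm_floor_div_zsmul_sub_le (g k) t) (tendsto_norm_zero.comp hg)
  refine hG.mem_of_tendsto (by simpa using hsmall.add (he.const_smul t))
    (Eventually.of_forall fun k => G.zsmul_mem (hgG k) _)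

theorem discreteTopology_of_isClosed_of_lineality_eq_bot [ProperSpace E] {G : AddSubgroup E}
    (hG : IsClosed (G : Set E)) (hV : G.lineality ℝ = ⊥) : DiscreteTopology G := by
  rw [discreteTopology_iff_isOpen_singleton_zero, Metric.isOpen_singleton_iff]
  by_contra! h
  choose g hg_small hg_ne using fun k : ℕ => h (1 / (k + 1)) Nat.one_div_pos_of_nat
  have hg : Tendsto (fun k => (g k : E)) atTop (𝓝 0) :=
    squeeze_zero_norm (fun k => by simpa using (hg_small k).le)
      tendsto_one_div_add_atTop_nhds_zero_nat
  have hdir : ∀ k, ‖(g k : E)‖⁻¹ • (g k : E) ∈ Metric.sphere (0 : E) 1 := fun k => by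
    simp [norm_smul, hg_ne k]
  obtain ⟨e, he, σ, hσ, hlim⟩ := (isCompact_sphere (0 : E) 1).tendsto_subseq hdir
  have heV : e ∈ G.lineality ℝ := smul_mem_of_tendsto_direction hG (fun k => (g (σ k)).2)
    (hg.comp hσ.tendsto_atTop) hlim
  rw [hV, Submodule.mem_bot] at heV
  simp [heV] at he

theorem exists_ne_zero_forall_mem_eq_intCast_of_isClosed [FiniteDimensional ℝ E]
    {G : AddSubgroup E} (hG : IsClosed (G : Set E)) (hspan : Submodule.span ℝ (G : Set E) = ⊤)
    (hne : G ≠ ⊤) : ∃ φ : E →ₗ[ℝ] ℝ, φ ≠ 0 ∧ ∀ x ∈ G, ∃ m : ℤ, φ x = m := by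
  obtain ⟨W, hW⟩ := (G.lineality ℝ).exists_isCompl
  let π := W.projectionOnto _ hW.symm
  let D : AddSubgroup W := G.comap W.subtype.toAddMonoidHom
  have hπD : ∀ x ∈ G, π x ∈ D := fun x hx => projectionOnto_mem_of_isCompl hW hx
  have hDc : IsClosed (D : Set W) := hG.preimage continuous_subtype_val
  have hDV : D.lineality ℝ = ⊥ := by
    refine (Submodule.eq_bot_iff _).2 fun x hx => ?_
    have hxG : (x : E) ∈ G.lineality ℝ := fun t => hx t
    simpa using Submodule.disjoint_def.1 hW.disjoint _ hxG x.2
  have : DiscreteTopology D := discreteTopology_of_isClosed_of_lineality_eq_bot hDc hDV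
  have hDspan : Submodule.span ℝ (D : Set W) = ⊤ := by
    rw [eq_top_iff, ← LinearMap.range_eq_top.2 (Submodule.projectionOnto_surjective hW.symm),
      LinearMap.range_eq_map, ← hspan, Submodule.map_span]
    exact Submodule.span_mono (Set.image_subset_iff.2 hπD)
  have : Nontrivial W := by
    refine Submodule.nontrivial_iff_ne_bot.2 fun hbot => hne (eq_top_iff.2 fun x _ => ?_)
    exact mem_of_mem_lineality (R := ℝ) (by simp [eq_top_of_isCompl_bot (hbot ▸ hW)])
  have : DiscreteTopology D.toIntSubmodule := ‹DiscreteTopology D›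
  have : IsZLattice ℝ D.toIntSubmodule := ⟨hDspan⟩
  obtain ⟨ψ, hψ0, hψ⟩ := IsZLattice.exists_ne_zero_forall_mem_eq_intCast D.toIntSubmodule
  refine ⟨ψ ∘ₗ π, fun h => hψ0 ?_, fun x hx => hψ _ (hπD x hx)⟩
  exact (LinearMap.cancel_right (Submodule.projectionOnto_surjective hW.symm)).1 (by simpa using h)

end AddSubgroup

theorem LinearIndependent.eq_zero_of_zsmul_eq_sum {M : Type*} [AddCommGroup M] [Module ℚ M]
    {n : ℕ} {x : M} {α : Fin n → M} (hα : LinearIndependent ℚ (Fin.cons x α : Fin (n + 1) → M))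
    {m : ℤ} {c : Fin n → ℤ} (h : m • x = ∑ i, c i • α i) : c = 0 := by
  have hrel := Fintype.linearIndependent_iff.1 (hα.restrict_scalars' ℤ) (Fin.cons (-m) c)
    (by simp [Fin.sum_univ_succ, h])
  funext i
  simpa using hrel i.succ

/-- Kronecker-type density criterion: if `(u₁, …, uₙ)` is a basis of `ℝⁿ` and
`1, α₁, …, αₙ` are linearly independent over `ℚ`, then
`ℤu₁ + ⋯ + ℤuₙ + ℤu` with `u = α₁u₁ + ⋯ + αₙuₙ` is dense in `ℝⁿ`. -/
theorem dense_lattice_add_zmultiples_of_linearIndependent (n : ℕ)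
    (b : Module.Basis (Fin n) ℝ (Fin n → ℝ)) (α : Fin n → ℝ)
    (hα : LinearIndependent ℚ (Fin.cons (1 : ℝ) α : Fin (n + 1) → ℝ)) :
    Dense (((⨆ i, AddSubgroup.zmultiples (b i)) ⊔
        AddSubgroup.zmultiples (∑ i, α i • b i) :
      AddSubgroup (Fin n → ℝ)) : Set (Fin n → ℝ)) := by
  set G : AddSubgroup (Fin n → ℝ) :=
    (⨆ i, AddSubgroup.zmultiples (b i)) ⊔ AddSubgroup.zmultiples (∑ i, α i • b i)
  have hbG : ∀ i, b i ∈ G.topologicalClosure := fun i => G.le_topologicalClosure <|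
    AddSubgroup.mem_sup_left (AddSubgroup.mem_iSup_of_mem i (AddSubgroup.mem_zmultiples _))
  have huG : ∑ i, α i • b i ∈ G.topologicalClosure :=
    G.le_topologicalClosure (AddSubgroup.mem_sup_right (AddSubgroup.mem_zmultiples _))
  have hspan : Submodule.span ℝ (G.topologicalClosure : Set (Fin n → ℝ)) = ⊤ :=
    eq_top_iff.2 (b.span_eq ▸ Submodule.span_mono (Set.range_subset_iff.2 hbG))
  rw [dense_iff_closure_eq, ← G.topologicalClosure_coe]
  by_contra hne
  obtain ⟨φ, hφ0, hφ⟩ := G.topologicalClosure.exists_ne_zero_forall_mem_eq_intCast_of_isClosed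
    G.isClosed_topologicalClosure hspan (fun h => hne (by simp [h]))
  choose c hc using fun i => hφ _ (hbG i)
  obtain ⟨m, hm⟩ := hφ _ huG
  have hc0 : c = 0 := hα.eq_zero_of_zsmul_eq_sum (m := m) <| by
    simp [← hm, map_sum, hc, mul_comm]
  exact hφ0 (b.ext fun i => by simp [hc, hc0])
end

section
/- Let H be an additive subgroup of ℝⁿ and let v₁, …, v_r ∈ ℝⁿ be linearly independent vectors such that span_ℝ{v₁, …, v_r} ∩ span_ℝ(H) = {0}. Set H' = H + ℤv₁ + ⋯ + ℤv_r. Then p(cl(H')) = p(cl(H)), where cl denotes topological closure and p(G) denotes the maximal dimension of an ℝ-linear subspace of ℝⁿ contained in G. -/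
/-- `pdim G` is the maximal dimension of an `ℝ`-linear subspace of `ℝⁿ`
contained in the set `G`. -/
noncomputable def pdim {n : ℕ} (G : Set (Fin n → ℝ)) : ℕ :=
  sSup {d : ℕ | ∃ V : Submodule ℝ (Fin n → ℝ), (V : Set (Fin n → ℝ)) ⊆ G ∧
    Module.finrank ℝ V = d}

/-!
Let `P` be a linear projection onto `span {vᵢ}` that kills `span H`; it exists by transversality.
On `H + L`, where `L = ∑ ℤ vᵢ`, it is the projection `h + l ↦ l` onto the discrete group `L`.
A subspace `V ⊆ cl (H + L)` is connected and `P` maps it into `cl L = L`, so `P` vanishes on `V`.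
Near a point of `ker P`, an element `h + l` of `H + L` has `l = P (h + l)` close to `0`, hence
`l = 0`; so `cl (H + L) ∩ ker P ⊆ cl H`, and `V ⊆ cl H`.
-/

open Set Topology Filter

theorem pdim_congr {n : ℕ} {A B : Set (Fin n → ℝ)}
    (h : ∀ V : Submodule ℝ (Fin n → ℝ), (V : Set (Fin n → ℝ)) ⊆ A ↔ (V : Set (Fin n → ℝ)) ⊆ B) :
    pdim A = pdim B := by
  simp only [pdim, h]

theorem Submodule.exists_linearMap_eq_self_and_eq_zero_of_disjoint {K M : Type*} [DivisionRing K]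
    [AddCommGroup M] [Module K M] {S T : Submodule K M} (hST : Disjoint S T) :
    ∃ P : M →ₗ[K] M, (∀ x ∈ S, P x = x) ∧ ∀ x ∈ T, P x = 0 := by
  obtain ⟨T', hTT', hT'S⟩ := hST.symm.exists_isCompl
  exact ⟨S.projection T' hT'S.symm, fun x hx => S.projection_apply_of_mem_left hT'S.symm hx,
    fun x hx => S.projection_apply_right hT'S.symm ⟨x, hTT' hx⟩⟩

theorem LinearIndependent.discreteTopology_iSup_zmultiples {ι E : Type*} [NormedAddCommGroup E]
    [NormedSpace ℝ E] [FiniteDimensional ℝ E] {v : ι → E} (hv : LinearIndependent ℝ v) :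
    DiscreteTopology (⨆ i, AddSubgroup.zmultiples (v i) : AddSubgroup E) := by
  have hvs := hv.linearIndepOn_id
  let b := Module.Basis.extend hvs
  have : Finite (hvs.extend (subset_univ _)) := Module.Finite.finite_basis b
  have hle : (⨆ i, AddSubgroup.zmultiples (v i)) ≤ (Submodule.span ℤ (range b)).toAddSubgroup :=
    iSup_le fun i => AddSubgroup.zmultiples_le.mpr <| Submodule.subset_span <| by
      simpa [b] using hvs.subset_extend (subset_univ _) (mem_range_self i)
  exact DiscreteTopology.of_subset (inferInstanceAs (DiscreteTopology (Submodule.span ℤ (range b))))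
    hle

section

variable {E : Type*} [AddCommGroup E] [TopologicalSpace E]

theorem mem_closure_of_mem_closure_sup_of_map_eq_zero {H L : AddSubgroup E}
    [DiscreteTopology L] {P : E →+ E} (hP : Continuous P) (hPH : H ≤ P.ker)
    (hPL : ∀ l ∈ L, P l = l) {x : E} (hx : x ∈ closure ((H ⊔ L : AddSubgroup E) : Set E))
    (hPx : P x = 0) : x ∈ closure (H : Set E) := by
  have hsup : ∀ y ∈ H ⊔ L, P y ∈ L ∧ (P y = 0 → y ∈ H) := by
    intro y hy
    obtain ⟨h, hh, l, hl, rfl⟩ := AddSubgroup.mem_sup.mp hy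
    rw [map_add, AddMonoidHom.mem_ker.mp (hPH hh), hPL l hl, zero_add]
    exact ⟨hl, fun hl0 => by simpa [hl0] using hh⟩
  obtain ⟨U, hU, hUL⟩ := nhds_inter_eq_singleton_of_mem_discrete
    (isDiscrete_iff_discreteTopology.mpr ‹_›) L.zero_mem
  have hPU : ∀ᶠ y in 𝓝 x, P y ∈ U := hP.tendsto x (hPx ▸ hU)
  rw [mem_closure_iff_frequently] at hx ⊢
  refine (hx.and_eventually hPU).mono fun y ⟨hy, hyU⟩ => (hsup y hy).2 ?_
  have hyUL : P y ∈ U ∩ L := ⟨hyU, (hsup y hy).1⟩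
  rwa [hUL] at hyUL

variable [IsTopologicalAddGroup E] [T2Space E] [Module ℝ E] [ContinuousSMul ℝ E]

theorem Submodule.coe_subset_closure_of_subset_closure_sup {H L : AddSubgroup E}
    [DiscreteTopology L] {P : E →+ E} (hP : Continuous P) (hPH : H ≤ P.ker)
    (hPL : ∀ l ∈ L, P l = l) (V : Submodule ℝ E)
    (hV : (V : Set E) ⊆ closure ((H ⊔ L : AddSubgroup E) : Set E)) :
    (V : Set E) ⊆ closure (H : Set E) := by
  have hmaps : MapsTo P (closure ((H ⊔ L : AddSubgroup E) : Set E)) L := by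
    rw [← (AddSubgroup.isClosed_of_discrete (H := L)).closure_eq]
    refine MapsTo.closure (fun y hy => ?_) hP
    obtain ⟨h, hh, l, hl, rfl⟩ := AddSubgroup.mem_sup.mp hy
    simpa [AddMonoidHom.mem_ker.mp (hPH hh), hPL l hl] using hl
  intro x hx
  have hPx : P x = 0 := by
    rw [← P.map_zero]
    exact V.convex.isPreconnected.constant_of_mapsTo (isDiscrete_iff_discreteTopology.mpr ‹_›)
      hP.continuousOn (hmaps.mono_left hV) hx V.zero_mem
  exact mem_closure_of_mem_closure_sup_of_map_eq_zero hP hPH hPL (hV hx) hPx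

end

/-- Lemma 3.2: adding `ℤ`-generators `v₁, …, v_r` that are linearly independent
and transverse to the span of `H` does not change the maximal dimension of a
subspace contained in the closure. -/
theorem pdim_closure_add_transverse_zmultiples (n r : ℕ) (H : AddSubgroup (Fin n → ℝ))
    (v : Fin r → (Fin n → ℝ)) (hv : LinearIndependent ℝ v)
    (htrans : Submodule.span ℝ (Set.range v) ⊓
      Submodule.span ℝ (H : Set (Fin n → ℝ)) = ⊥) :
    pdim (closure ((H ⊔ ⨆ i, AddSubgroup.zmultiples (v i) :
        AddSubgroup (Fin n → ℝ)) : Set (Fin n → ℝ))) =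
      pdim (closure (H : Set (Fin n → ℝ))) := by
  obtain ⟨P, hPv, hPH⟩ :=
    Submodule.exists_linearMap_eq_self_and_eq_zero_of_disjoint (disjoint_iff.mpr htrans)
  have := hv.discreteTopology_iSup_zmultiples
  have hPL : ∀ l ∈ ⨆ i, AddSubgroup.zmultiples (v i), P l = l := by
    have hle : (⨆ i, AddSubgroup.zmultiples (v i)) ≤
        (Submodule.span ℝ (range v)).toAddSubgroup :=
      iSup_le fun i => AddSubgroup.zmultiples_le.mpr (Submodule.subset_span (mem_range_self i))
    exact fun l hl => hPv l (hle hl)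
  refine pdim_congr fun V =>
    ⟨fun hV => ?_, fun hV => hV.trans (closure_mono (SetLike.coe_mono le_sup_left))⟩
  exact V.coe_subset_closure_of_subset_closure_sup (P := P.toAddMonoidHom)
    P.continuous_of_finiteDimensional (fun h hh => hPH h (Submodule.subset_span hh)) hPL hV
end

section
/- Let V be an ℝ-linear subspace of ℝⁿ and Γ a discrete additive subgroup of ℝⁿ such that V ∩ span_ℝ(Γ) = {0}. Then the set V + Γ = {v + γ : v ∈ V, γ ∈ Γ} is closed in ℝⁿ. -/
/-!
Since `V` is disjoint from `W = span Γ`, the subspace `W` extends to a complement `U` of `V`.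
The projection `π` onto `U` along `V` is continuous and fixes `Γ ⊆ U`, so `V + Γ = π⁻¹' Γ`,
which is closed because a discrete subgroup of a Hausdorff group is closed.
-/

open Pointwise

namespace Submodule

theorem coe_add_eq_preimage_projection {R E : Type*} [Ring R] [AddCommGroup E] [Module R E]
    {U V : Submodule R E} (hUV : IsCompl U V) {S : Set E} (hS : S ⊆ U) :
    (V : Set E) + S = U.projection V hUV ⁻¹' S := by
  ext x
  constructor
  · rintro ⟨v, hv, s, hs, rfl⟩
    rwa [Set.mem_preimage, map_add, projection_apply_of_mem_right hUV hv,
      projection_apply_of_mem_left hUV (hS hs), zero_add]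
  · intro hx
    refine ⟨V.projection U hUV.symm x, projection_apply_mem _ x, _, hx, ?_⟩
    exact projection_add_projection_eq_self hUV.symm x

theorem isClosed_add_of_isCompl {𝕜 E : Type*} [NontriviallyNormedField 𝕜] [CompleteSpace 𝕜]
    [AddCommGroup E] [Module 𝕜 E] [TopologicalSpace E] [IsTopologicalAddGroup E]
    [ContinuousSMul 𝕜 E] [T2Space E] [FiniteDimensional 𝕜 E]
    {U V : Submodule 𝕜 E} (hUV : IsCompl U V) {S : Set E} (hS : S ⊆ U) (hSc : IsClosed S) :
    IsClosed ((V : Set E) + S) := by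
  rw [coe_add_eq_preimage_projection hUV hS]
  exact hSc.preimage (U.projection V hUV).continuous_of_finiteDimensional

end Submodule

/-- The sum of a linear subspace `V` of `ℝⁿ` and a discrete additive subgroup
`Γ` with `V ∩ span ℝ Γ = {0}` is a closed subset of `ℝⁿ`. -/
theorem isClosed_subspace_add_discrete (n : ℕ) (V : Submodule ℝ (Fin n → ℝ))
    (Γ : AddSubgroup (Fin n → ℝ)) (hΓ : DiscreteTopology Γ)
    (htrans : V ⊓ Submodule.span ℝ (Γ : Set (Fin n → ℝ)) = ⊥) :
    IsClosed ((V : Set (Fin n → ℝ)) + (Γ : Set (Fin n → ℝ))) := by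
  obtain ⟨U, hspan_le, hUV⟩ := (disjoint_iff.mpr htrans).symm.exists_isCompl
  exact Submodule.isClosed_add_of_isCompl hUV (Submodule.subset_span.trans hspan_le)
    AddSubgroup.isClosed_of_discrete
end

section
/- Let E be an ℝ-linear subspace of ℝⁿ and D a discrete additive subgroup of ℝⁿ with E ∩ span_ℝ(D) = {0}. Then every ℝ-linear subspace V of ℝⁿ with V ⊆ E + D satisfies V ⊆ E. In particular, the maximal dimension of a linear subspace contained in the closed subgroup E + D equals dim_ℝ(E). -/
/-!
Choose a complement `W` of `E` containing `span D` and let `π` be the projection onto `W`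
along `E`. On `E + D` the projection `π` sends `e + d` to `d`, so it maps a subspace `V ⊆ E + D`
into `D`. For `v ∈ V` the whole line `ℝ • π v = π (ℝ • v)` then lies in the discrete group `D`,
which forces `π v = 0`, i.e. `v ∈ E`.
-/

open Pointwise

open Submodule

variable {M : Type*} [AddCommGroup M] [Module ℝ M] [TopologicalSpace M] [ContinuousSMul ℝ M]

theorem AddSubgroup.eq_zero_of_forall_smul_mem (D : AddSubgroup M) [DiscreteTopology D]
    {x : M} (h : ∀ t : ℝ, t • x ∈ D) : x = 0 := by
  have hline : Continuous fun t : ℝ => (⟨t • x, h t⟩ : D) :=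
    (continuous_id.smul continuous_const).subtype_mk _
  simpa using
    congrArg Subtype.val (PreconnectedSpace.constant inferInstance hline (x := 1) (y := 0))

theorem Submodule.le_of_coe_subset_add_discrete {E V : Submodule ℝ M} {D : AddSubgroup M}
    [DiscreteTopology D] (hED : Disjoint E (span ℝ (D : Set M)))
    (hV : (V : Set M) ⊆ (E : Set M) + (D : Set M)) : V ≤ E := by
  obtain ⟨W, hDW, hWE⟩ := hED.symm.exists_isCompl
  have hπ_mem : ∀ v ∈ V, W.projection E hWE v ∈ D := by
    intro v hv
    obtain ⟨e, he, d, hd, rfl⟩ := hV hv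
    rwa [map_add, projection_apply_of_mem_right hWE he,
      projection_apply_of_mem_left hWE (hDW (subset_span hd)), zero_add]
  intro v hv
  rw [← projection_apply_eq_zero_iff hWE]
  exact D.eq_zero_of_forall_smul_mem fun t => by
    simpa using hπ_mem (t • v) (V.smul_mem t hv)

theorem pdim_eq_finrank {n : ℕ} {G : Set (Fin n → ℝ)} (E : Submodule ℝ (Fin n → ℝ))
    (hE : (E : Set (Fin n → ℝ)) ⊆ G) (hmax : ∀ V : Submodule ℝ (Fin n → ℝ),
      (V : Set (Fin n → ℝ)) ⊆ G → V ≤ E) :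
    pdim G = Module.finrank ℝ E := by
  refine IsGreatest.csSup_eq ⟨⟨E, hE, rfl⟩, ?_⟩
  rintro d ⟨V, hV, rfl⟩
  exact finrank_mono (hmax V hV)

/-- Any linear subspace contained in `E + D` (with `D` discrete and transverse
to `E`) lies in `E`; hence the maximal dimension of a subspace contained in
`E + D` is `dim E`. -/
theorem subspace_subset_of_subset_add_discrete (n : ℕ) (E : Submodule ℝ (Fin n → ℝ))
    (D : AddSubgroup (Fin n → ℝ)) (hD : DiscreteTopology D)
    (htrans : E ⊓ Submodule.span ℝ (D : Set (Fin n → ℝ)) = ⊥) :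
    (∀ V : Submodule ℝ (Fin n → ℝ),
        (V : Set (Fin n → ℝ)) ⊆ (E : Set (Fin n → ℝ)) + (D : Set (Fin n → ℝ)) → V ≤ E) ∧
      pdim ((E : Set (Fin n → ℝ)) + (D : Set (Fin n → ℝ))) = Module.finrank ℝ E := by
  have hmax : ∀ V : Submodule ℝ (Fin n → ℝ),
      (V : Set (Fin n → ℝ)) ⊆ (E : Set (Fin n → ℝ)) + (D : Set (Fin n → ℝ)) → V ≤ E :=
    fun _ => le_of_coe_subset_add_discrete (disjoint_iff.mpr htrans)
  exact ⟨hmax, pdim_eq_finrank E (Set.subset_add_left _ D.zero_mem) hmax⟩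
end

section
/- Let D and D' be discrete additive subgroups of ℝⁿ. If there exists an isomorphism of additive groups between D and D', then dim_ℝ(span_ℝ(D)) = dim_ℝ(span_ℝ(D')). -/
open Submodule Module

/-- For a discrete subgroup of `ℝⁿ`, the `ℤ`-rank equals the real dimension of its span. -/
lemma finrank_int_eq_finrank_span_of_discrete {n : ℕ} (D : AddSubgroup (Fin n → ℝ))
    (hD : DiscreteTopology D) :
    finrank ℤ D.toIntSubmodule = finrank ℝ (span ℝ (D : Set (Fin n → ℝ))) := by
  set L : Submodule ℤ (Fin n → ℝ) := D.toIntSubmodule with hL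
  have hDL : DiscreteTopology L := hD
  let f := (span ℝ (L : Set (Fin n → ℝ))).subtype
  let L₀ := L.comap (f.restrictScalars ℤ)
  have h_img : f '' L₀ = L := by
    rw [← LinearMap.coe_restrictScalars ℤ f, ← Submodule.map_coe (f.restrictScalars ℤ),
      Submodule.map_comap_eq_self]
    exact fun x hx ↦ LinearMap.mem_range.mpr ⟨⟨x, Submodule.subset_span hx⟩, rfl⟩
  have hmap : L₀.map (f.restrictScalars ℤ) = L := SetLike.ext'_iff.mpr h_img
  have hdisc : DiscreteTopology L₀ := by
    refine DiscreteTopology.preimage_of_continuous_injective (L : Set (Fin n → ℝ)) ?_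
      (injective_subtype _)
    exact LinearMap.continuous_of_finiteDimensional f
  have : IsZLattice ℝ L₀ := ⟨by
    rw [← (Submodule.map_injective_of_injective (injective_subtype _)).eq_iff,
      Submodule.map_span, Submodule.map_top, range_subtype, h_img]⟩
  have hrank := ZLattice.rank ℝ L₀
  have hequiv : L₀ ≃ₗ[ℤ] L :=
    (Submodule.equivMapOfInjective (f.restrictScalars ℤ)
      ((injective_subtype _)) L₀).trans (LinearEquiv.ofEq _ _ hmap)
  have : finrank ℤ L = finrank ℤ L₀ := (LinearEquiv.finrank_eq hequiv).symm
  rw [this, hrank]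
  rfl

/-- Core of Theorem 1.8(iii): abstractly isomorphic discrete additive subgroups
of `ℝⁿ` have linear spans of the same dimension. -/
theorem finrank_span_eq_of_discrete_addEquiv (n : ℕ) (D D' : AddSubgroup (Fin n → ℝ))
    (hD : DiscreteTopology D) (hD' : DiscreteTopology D')
    (h : Nonempty (D ≃+ D')) :
    Module.finrank ℝ (Submodule.span ℝ (D : Set (Fin n → ℝ))) =
      Module.finrank ℝ (Submodule.span ℝ (D' : Set (Fin n → ℝ))) := by
  obtain ⟨e⟩ := h
  rw [← finrank_int_eq_finrank_span_of_discrete D hD,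
    ← finrank_int_eq_finrank_span_of_discrete D' hD']
  exact LinearEquiv.finrank_eq (e.toIntLinearEquiv)
end

section
/- Let E be an ℝ-linear subspace of ℝⁿ and D a discrete additive subgroup of ℝⁿ with E ∩ span_ℝ(D) = {0}. Let f₁ : ℝⁿ → ℝⁿ be an ℝ-linear map and f₂ : D → ℝⁿ a homomorphism of additive groups. Then the set {x + y : x ∈ E, y ∈ D, f₁(x) = 0 and f₂(y) = 0} is closed in ℝⁿ; in particular, if E', D' satisfy E' ∩ span_ℝ(D') = {0}, f₁(E) ⊆ E' and f₂(D) ⊆ D', this set is the kernel of the homomorphism of closed additive groups f(x + y) = f₁(x) + f₂(y), and hence Ker(f) is a closed additive subgroup of ℝⁿ. -/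
/-!
Since `E ∩ span D = 0`, the subspace `E` has a complement `W` containing `D`. The two projections
of `ℝⁿ = E ⊕ W` are continuous, and the kernel is the set of points whose `E`-component lies in the
closed subspace `E ∩ ker f₁` and whose `W`-component lies in `ker f₂ ⊆ D`, which is closed because
`D` is discrete.
-/

open scoped Pointwise

namespace Submodule

variable {R M : Type*} [Ring R] [AddCommGroup M] [Module R M] {p q : Submodule R M}

theorem mem_add_iff_projection_mem (h : IsCompl p q) {A B : Set M} (hA : A ⊆ p) (hB : B ⊆ q)
    (z : M) : z ∈ A + B ↔ p.projection q h z ∈ A ∧ q.projection p h.symm z ∈ B := by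
  constructor
  · rintro ⟨a, ha, b, hb, rfl⟩
    have hpa : p.projection q h a = a := projection_apply_of_mem_left h (hA ha)
    have hpb : p.projection q h b = 0 := projection_apply_of_mem_right h (hB hb)
    have hqa : q.projection p h.symm a = 0 := projection_apply_of_mem_right h.symm (hA ha)
    have hqb : q.projection p h.symm b = b := projection_apply_of_mem_left h.symm (hB hb)
    rw [map_add, map_add, hpa, hpb, hqa, hqb, add_zero, zero_add]
    exact ⟨ha, hb⟩
  · rintro ⟨hzA, hzB⟩
    exact ⟨_, hzA, _, hzB, projection_add_projection_eq_self h z⟩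

section FiniteDimensional

variable {𝕜 V : Type*} [NontriviallyNormedField 𝕜] [CompleteSpace 𝕜] [AddCommGroup V]
  [Module 𝕜 V] [TopologicalSpace V] [IsTopologicalAddGroup V] [ContinuousSMul 𝕜 V] [T2Space V]
  [FiniteDimensional 𝕜 V]

theorem isClosed_add_of_isCompl_s19 {p q : Submodule 𝕜 V} (h : IsCompl p q) {A B : Set V}
    (hA : IsClosed A) (hAp : A ⊆ p) (hB : IsClosed B) (hBq : B ⊆ q) : IsClosed (A + B) := by
  have hAB : A + B = p.projection q h ⁻¹' A ∩ q.projection p h.symm ⁻¹' B :=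
    Set.ext (mem_add_iff_projection_mem h hAp hBq)
  rw [hAB]
  exact (hA.preimage (LinearMap.continuous_of_finiteDimensional _)).inter
    (hB.preimage (LinearMap.continuous_of_finiteDimensional _))

end FiniteDimensional

end Submodule

/-- Corollary 4.2(i): for `E` a subspace, `D` a discrete additive subgroup with
`E ∩ span ℝ D = {0}`, a linear map `f₁` and an additive homomorphism `f₂ : D → ℝⁿ`,
the set `{x + y : x ∈ E, y ∈ D, f₁ x = 0, f₂ y = 0}` (the kernel of the
homomorphism of closed additive groups `x + y ↦ f₁ x + f₂ y`) is a closed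
additive subgroup of `ℝⁿ`. -/
theorem isClosed_ker_hom_closed_additive_group (n : ℕ)
    (E : Submodule ℝ (Fin n → ℝ)) (D : AddSubgroup (Fin n → ℝ))
    (hD : DiscreteTopology D)
    (hED : E ⊓ Submodule.span ℝ (D : Set (Fin n → ℝ)) = ⊥)
    (f₁ : (Fin n → ℝ) →ₗ[ℝ] (Fin n → ℝ)) (f₂ : D →+ (Fin n → ℝ)) :
    IsClosed {z : Fin n → ℝ | ∃ x ∈ E, ∃ y : D, f₁ x = 0 ∧ f₂ y = 0 ∧ z = x + ↑y} ∧
      ∃ K : AddSubgroup (Fin n → ℝ),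
        (K : Set (Fin n → ℝ)) =
          {z : Fin n → ℝ | ∃ x ∈ E, ∃ y : D, f₁ x = 0 ∧ f₂ y = 0 ∧ z = x + ↑y} := by
  set K₁ := (E ⊓ LinearMap.ker f₁).toAddSubgroup
  set K₂ := f₂.ker.map D.subtype
  have hK : ((K₁ ⊔ K₂ : AddSubgroup _) : Set (Fin n → ℝ)) =
      {z | ∃ x ∈ E, ∃ y : D, f₁ x = 0 ∧ f₂ y = 0 ∧ z = x + ↑y} := by
    ext z
    simp only [SetLike.mem_coe, AddSubgroup.mem_sup, Set.mem_ofPred_eq]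
    constructor
    · rintro ⟨x, ⟨hxE, hx⟩, _, ⟨y, hy, rfl⟩, rfl⟩
      exact ⟨x, hxE, y, hx, hy, rfl⟩
    · rintro ⟨x, hxE, y, hx, hy, rfl⟩
      exact ⟨x, ⟨hxE, hx⟩, y, ⟨y, hy, rfl⟩, rfl⟩
  refine ⟨hK ▸ ?_, _, hK⟩
  obtain ⟨W, hDW, hWE⟩ := (disjoint_iff.mpr hED).symm.exists_isCompl
  have hK₂D : (K₂ : Set (Fin n → ℝ)) ⊆ D := by
    rintro _ ⟨y, -, rfl⟩
    exact y.2
  have : DiscreteTopology K₂ := hD.of_subset hK₂D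
  rw [AddSubgroup.add_normal]
  exact Submodule.isClosed_add_of_isCompl_s19 hWE.symm
    (Submodule.closed_of_finiteDimensional (E ⊓ LinearMap.ker f₁)) inf_le_left
    AddSubgroup.isClosed_of_discrete (hK₂D.trans (Submodule.subset_span.trans hDW))
end
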